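/- arXiv:2510.08412 — 6 statements merged into one kernel-verified Lean document; each statement's English description precedes it below -/
import Mathlib

section
/- Let N ≥ 1, let λ : {1,…,N} → ℝ, let S ⊆ {1,…,N} be nonempty with n = |S|, and let z ∈ Δ be a point whose support is exactly S (z_i > 0 for i ∈ S and z_i = 0 otherwise). If z is an equilibrium of the invader-driven replicator vector field (F(z) = 0) and λ_i ≠ 0 for every i ∈ S, then z_i = 1 − Q(z)/λ_i for every i ∈ S, and Q(z) · Σ_{i∈S} λ_i⁻¹ = n − 1. -/
/-! On the support of an equilibrium the factor `z_i` can be cancelled, leaving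
`λ_i (1 - z_i) = Q(z)`, i.e. `z_i = 1 - Q(z)/λ_i`. Summing this over `S` and using
`Σ_{i∈S} z_i = 1` gives `1 = n - Q(z) Σ_{i∈S} λ_i⁻¹`. -/

open Finset

theorem eq_one_sub_div_of_mul_sub_eq_zero {K : Type*} [Field K] {x l q : K}
    (hx : x ≠ 0) (hl : l ≠ 0) (h : x * (l * (1 - x) - q) = 0) : x = 1 - q / l := by
  have hq : l * (1 - x) = q := sub_eq_zero.mp ((mul_eq_zero.mp h).resolve_left hx)
  rw [← hq, mul_div_cancel_left₀ _ hl, sub_sub_cancel]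

theorem mul_sum_inv_eq_card_sub_one {ι K : Type*} [Field K] {S : Finset ι} {z l : ι → K}
    {q : K} (hsum : ∑ i ∈ S, z i = 1) (hz : ∀ i ∈ S, z i = 1 - q / l i) :
    q * ∑ i ∈ S, (l i)⁻¹ = (#S : K) - 1 := by
  rw [sum_congr rfl hz, sum_sub_distrib, sum_const, nsmul_one] at hsum
  simp only [div_eq_mul_inv, ← mul_sum] at hsum
  linear_combination -hsum

theorem stmt_0_general (N : ℕ) (lam : Fin N → ℝ)
    (S : Finset (Fin N)) (n : ℕ) (hn : n = S.card)
    (z : Fin N → ℝ)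
    (hsupp_pos : ∀ i ∈ S, 0 < z i) (hsupp_zero : ∀ i ∉ S, z i = 0)
    (hsum : ∑ i, z i = 1)
    (heq : ∀ i, z i * (lam i * (1 - z i) - ∑ j, lam j * (1 - z j) * z j) = 0)
    (hlam : ∀ i ∈ S, lam i ≠ 0) :
    (∀ i ∈ S, z i = 1 - (∑ j, lam j * (1 - z j) * z j) / lam i) ∧
      (∑ j, lam j * (1 - z j) * z j) * (∑ i ∈ S, (lam i)⁻¹) = (n : ℝ) - 1 := by
  have hz : ∀ i ∈ S, z i = 1 - (∑ j, lam j * (1 - z j) * z j) / lam i := fun i hi =>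
    eq_one_sub_div_of_mul_sub_eq_zero (hsupp_pos i hi).ne' (hlam i hi) (heq i)
  have hsumS : ∑ i ∈ S, z i = 1 := by
    rw [← hsum]
    exact sum_subset (subset_univ S) fun i _ hi => hsupp_zero i hi
  exact ⟨hz, hn ▸ mul_sum_inv_eq_card_sub_one hsumS hz⟩

/-- For the invader-driven replicator vector field
`F(z)_i = z_i (λ_i (1 - z_i) - Q(z))` with `Q(z) = Σ_j λ_j (1 - z_j) z_j`,
if `z` lies in the simplex with support exactly `S`, is an equilibrium, and `λ_i ≠ 0`
on `S`, then `z_i = 1 - Q(z)/λ_i` on `S` and `Q(z) · Σ_{i∈S} λ_i⁻¹ = n - 1`. -/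
theorem stmt_0 (N : ℕ) (hN : 1 ≤ N) (lam : Fin N → ℝ)
    (S : Finset (Fin N)) (hS : S.Nonempty) (n : ℕ) (hn : n = S.card)
    (z : Fin N → ℝ)
    (hsupp_pos : ∀ i ∈ S, 0 < z i) (hsupp_zero : ∀ i ∉ S, z i = 0)
    (hnonneg : ∀ i, 0 ≤ z i) (hsum : ∑ i, z i = 1)
    (heq : ∀ i, z i * (lam i * (1 - z i) - ∑ j, lam j * (1 - z j) * z j) = 0)
    (hlam : ∀ i ∈ S, lam i ≠ 0) :
    (∀ i ∈ S, z i = 1 - (∑ j, lam j * (1 - z j) * z j) / lam i) ∧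
      (∑ j, lam j * (1 - z j) * z j) * (∑ i ∈ S, (lam i)⁻¹) = (n : ℝ) - 1 :=
  stmt_0_general N lam S n hn z hsupp_pos hsupp_zero hsum heq hlam
end

section
/- Let N ≥ 1, let λ : {1,…,N} → ℝ, and set S⁺ = {i : λ_i ≥ 0} and S⁻ = {i : λ_i < 0}. For every z in the standard simplex Δ one has Σ_{i∈S⁺} F(z)_i = (Σ_{i∈S⁺} λ_i(1−z_i)z_i)·(1 − Σ_{i∈S⁺} z_i) − (Σ_{i∈S⁻} λ_i(1−z_i)z_i)·(Σ_{i∈S⁺} z_i) ≥ 0; in other words, the Lyapunov function V₁(z) = 1 − Σ_{i∈S⁺} z_i is nonincreasing along the invader-driven replicator flow. -/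
/-!
Write `G_P = Σ_{i∈S⁺} λ_i(1-z_i)z_i ≥ 0`, `G_N = Σ_{i∈S⁻} λ_i(1-z_i)z_i ≤ 0` and `Z_P = Σ_{i∈S⁺} z_i`.
Since `Q = G_P + G_N`, summing `F(z)_i` over `S⁺` gives `G_P - Q Z_P = G_P (1 - Z_P) - G_N Z_P`,
an identity that needs nothing about `z`. On the simplex `0 ≤ Z_P ≤ 1` and `0 ≤ z_i ≤ 1`,
so both terms of the right-hand side are nonnegative.
-/

open Finset

variable {ι : Type*}

theorem sum_filter_mul_sub_weightedSum (s : Finset ι) (p : ι → Prop) [DecidablePred p]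
    (f z : ι → ℝ) :
    ∑ i ∈ s.filter p, z i * (f i - ∑ j ∈ s, f j * z j)
      = (∑ i ∈ s.filter p, f i * z i) * (1 - ∑ i ∈ s.filter p, z i)
        - (∑ i ∈ s.filter (fun i => ¬ p i), f i * z i) * ∑ i ∈ s.filter p, z i := by
  rw [← sum_filter_add_sum_filter_not s p (fun j => f j * z j)]
  simp only [mul_sub, sum_sub_distrib, ← sum_mul, mul_comm (z _) (f _)]
  ring

variable [Fintype ι]

theorem sum_filter_le_one_of_mem_stdSimplex {z : ι → ℝ} (hz : z ∈ stdSimplex ℝ ι)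
    (p : ι → Prop) [DecidablePred p] : ∑ i ∈ univ.filter p, z i ≤ 1 :=
  hz.2 ▸ sum_le_sum_of_subset_of_nonneg (filter_subset _ _) fun i _ _ => hz.1 i

theorem one_sub_mul_self_nonneg_of_mem_stdSimplex {z : ι → ℝ} (hz : z ∈ stdSimplex ℝ ι)
    (i : ι) : 0 ≤ (1 - z i) * z i :=
  have hi := mem_Icc_of_mem_stdSimplex hz i
  mul_nonneg (sub_nonneg.2 hi.2) hi.1

theorem sum_filter_nonneg_mul_one_sub_mul_nonneg {z : ι → ℝ} (hz : z ∈ stdSimplex ℝ ι)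
    (lam : ι → ℝ) :
    0 ≤ ∑ i ∈ univ.filter (fun i => 0 ≤ lam i), lam i * (1 - z i) * z i :=
  sum_nonneg fun i hi => by
    rw [mul_assoc]
    exact mul_nonneg (mem_filter.1 hi).2 (one_sub_mul_self_nonneg_of_mem_stdSimplex hz i)

theorem sum_filter_not_nonneg_mul_one_sub_mul_nonpos {z : ι → ℝ} (hz : z ∈ stdSimplex ℝ ι)
    (lam : ι → ℝ) :
    ∑ i ∈ univ.filter (fun i => ¬ 0 ≤ lam i), lam i * (1 - z i) * z i ≤ 0 :=
  sum_nonpos fun i hi => by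
    rw [mul_assoc]
    exact mul_nonpos_of_nonpos_of_nonneg (le_of_not_ge (mem_filter.1 hi).2)
      (one_sub_mul_self_nonneg_of_mem_stdSimplex hz i)

theorem stmt_1_general (N : ℕ) (lam : Fin N → ℝ)
    (z : Fin N → ℝ) (hnonneg : ∀ i, 0 ≤ z i) (hsum : ∑ i, z i = 1) :
    (∑ i ∈ Finset.univ.filter (fun i => 0 ≤ lam i),
        z i * (lam i * (1 - z i) - ∑ j, lam j * (1 - z j) * z j))
      = (∑ i ∈ Finset.univ.filter (fun i => 0 ≤ lam i), lam i * (1 - z i) * z i) *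
          (1 - ∑ i ∈ Finset.univ.filter (fun i => 0 ≤ lam i), z i)
        - (∑ i ∈ Finset.univ.filter (fun i => lam i < 0), lam i * (1 - z i) * z i) *
          (∑ i ∈ Finset.univ.filter (fun i => 0 ≤ lam i), z i)
    ∧ 0 ≤ ∑ i ∈ Finset.univ.filter (fun i => 0 ≤ lam i),
        z i * (lam i * (1 - z i) - ∑ j, lam j * (1 - z j) * z j) := by
  have hz : z ∈ stdSimplex ℝ (Fin N) := ⟨hnonneg, hsum⟩
  have hneg : univ.filter (fun i => lam i < 0) = univ.filter (fun i => ¬ 0 ≤ lam i) := by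
    simp only [not_le]
  have hid := sum_filter_mul_sub_weightedSum univ (fun i => 0 ≤ lam i)
    (fun i => lam i * (1 - z i)) z
  rw [hneg]
  refine ⟨hid, hid ▸ sub_nonneg.2 ?_⟩
  calc (∑ i ∈ univ.filter (fun i => ¬ 0 ≤ lam i), lam i * (1 - z i) * z i)
        * ∑ i ∈ univ.filter (fun i => 0 ≤ lam i), z i
      ≤ 0 := mul_nonpos_of_nonpos_of_nonneg (sum_filter_not_nonneg_mul_one_sub_mul_nonpos hz lam)
        (sum_nonneg fun i _ => hnonneg i)
    _ ≤ _ := mul_nonneg (sum_filter_nonneg_mul_one_sub_mul_nonneg hz lam)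
        (sub_nonneg.2 (sum_filter_le_one_of_mem_stdSimplex hz _))

/-- For the invader-driven replicator vector field
`F(z)_i = z_i (λ_i (1 - z_i) - Q(z))` with `Q(z) = Σ_j λ_j (1 - z_j) z_j`,
and `S⁺ = {i : λ_i ≥ 0}`, `S⁻ = {i : λ_i < 0}`, for every `z` in the simplex:
`Σ_{i∈S⁺} F(z)_i = (Σ_{i∈S⁺} λ_i(1-z_i)z_i)(1 - Σ_{i∈S⁺} z_i)
  - (Σ_{i∈S⁻} λ_i(1-z_i)z_i)(Σ_{i∈S⁺} z_i) ≥ 0`,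
i.e. `V₁(z) = 1 - Σ_{i∈S⁺} z_i` is nonincreasing along the flow. -/
theorem stmt_1 (N : ℕ) (hN : 1 ≤ N) (lam : Fin N → ℝ)
    (z : Fin N → ℝ) (hnonneg : ∀ i, 0 ≤ z i) (hsum : ∑ i, z i = 1) :
    (∑ i ∈ Finset.univ.filter (fun i => 0 ≤ lam i),
        z i * (lam i * (1 - z i) - ∑ j, lam j * (1 - z j) * z j))
      = (∑ i ∈ Finset.univ.filter (fun i => 0 ≤ lam i), lam i * (1 - z i) * z i) *
          (1 - ∑ i ∈ Finset.univ.filter (fun i => 0 ≤ lam i), z i)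
        - (∑ i ∈ Finset.univ.filter (fun i => lam i < 0), lam i * (1 - z i) * z i) *
          (∑ i ∈ Finset.univ.filter (fun i => 0 ≤ lam i), z i)
    ∧ 0 ≤ ∑ i ∈ Finset.univ.filter (fun i => 0 ≤ lam i),
        z i * (lam i * (1 - z i) - ∑ j, lam j * (1 - z j) * z j) :=
  stmt_1_general N lam z hnonneg hsum
end

section
/- Let N ≥ 2 and λ₁ ≥ λ₂ ≥ ⋯ ≥ λ_N > 0, let 2 ≤ k ≤ N satisfy λ_{k+1} < Q*_k < λ_k (with the convention λ_{N+1} = 0), and define z* ∈ ℝ^N by z*_j = 1 − Q*_k/λ_j for 1 ≤ j ≤ k and z*_j = 0 for j > k. Then z* lies in the standard simplex Δ, and for the strictly concave potential Φ(z) = Σ_{i=1}^N (λ_i z_i − (λ_i/2) z_i²) one has Φ(z) ≤ Φ(z*) for every z ∈ Δ, with equality if and only if z = z*; that is, z* is the unique maximizer of Φ over Δ. -/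
/-- Let `N ≥ 2`, `λ₁ ≥ ⋯ ≥ λ_N > 0`, let `2 ≤ k ≤ N` satisfy
`λ_{k+1} < Q*_k < λ_k` (with convention `λ_{N+1} = 0`), and define
`z*_j = 1 - Q*_k/λ_j` for `j ≤ k`, `z*_j = 0` otherwise. Then `z*` is in the
standard simplex and is the unique maximizer over the simplex of the strictly
concave potential `Φ(z) = Σ_i (λ_i z_i - (λ_i/2) z_i²)`. -/
theorem stmt_3 (N : ℕ) (hN : 2 ≤ N) (lam : ℕ → ℝ)
    (hpos : ∀ i, 1 ≤ i → i ≤ N → 0 < lam i)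
    (hmono : ∀ i, 1 ≤ i → i + 1 ≤ N → lam (i + 1) ≤ lam i)
    (k : ℕ) (hk2 : 2 ≤ k) (hkN : k ≤ N)
    (Qk : ℝ) (hQk : Qk = ((k : ℝ) - 1) / ∑ j ∈ Finset.Icc 1 k, (lam j)⁻¹)
    (hlow : (if k + 1 ≤ N then lam (k + 1) else 0) < Qk)
    (hhigh : Qk < lam k)
    (zstar : ℕ → ℝ)
    (hzstar : ∀ j, 1 ≤ j → j ≤ N → zstar j = if j ≤ k then 1 - Qk / lam j else 0) :
    (∀ j ∈ Finset.Icc 1 N, 0 ≤ zstar j) ∧ (∑ j ∈ Finset.Icc 1 N, zstar j = 1) ∧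
    ∀ z : ℕ → ℝ, (∀ j ∈ Finset.Icc 1 N, 0 ≤ z j) →
      (∑ j ∈ Finset.Icc 1 N, z j = 1) →
      ((∑ i ∈ Finset.Icc 1 N, (lam i * z i - lam i / 2 * (z i) ^ 2))
          ≤ ∑ i ∈ Finset.Icc 1 N, (lam i * zstar i - lam i / 2 * (zstar i) ^ 2)) ∧
      ((∑ i ∈ Finset.Icc 1 N, (lam i * z i - lam i / 2 * (z i) ^ 2))
            = ∑ i ∈ Finset.Icc 1 N, (lam i * zstar i - lam i / 2 * (zstar i) ^ 2)
          ↔ ∀ j ∈ Finset.Icc 1 N, z j = zstar j) := by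
  -- antitonicity of lam on [1, N]
  have hanti : ∀ a b : ℕ, 1 ≤ a → a ≤ b → b ≤ N → lam b ≤ lam a := by
    intro a b ha hab hbN
    induction b with
    | zero => omega
    | succ n ih =>
      rcases Nat.eq_or_lt_of_le hab with h | h
      · rw [← h]
      · have h1 : a ≤ n := by omega
        calc lam (n + 1) ≤ lam n := hmono n (by omega) hbN
          _ ≤ lam a := ih h1 (by omega)
  -- positivity of S and Qk
  have hSpos : 0 < ∑ j ∈ Finset.Icc 1 k, (lam j)⁻¹ := by
    apply Finset.sum_pos
    · intro j hj
      simp only [Finset.mem_Icc] at hj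
      exact inv_pos.mpr (hpos j hj.1 (le_trans hj.2 hkN))
    · exact ⟨1, by simp [Finset.mem_Icc]; omega⟩
  have hQpos : 0 < Qk := by
    rw [hQk]
    apply div_pos _ hSpos
    have : (2 : ℝ) ≤ (k : ℝ) := by exact_mod_cast hk2
    linarith
  -- lam k positive
  have hlamk : 0 < lam k := hpos k (by omega) hkN
  -- nonnegativity of zstar
  have hnn : ∀ j ∈ Finset.Icc 1 N, 0 ≤ zstar j := by
    intro j hj
    simp only [Finset.mem_Icc] at hj
    rw [hzstar j hj.1 hj.2]
    by_cases hjk : j ≤ k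
    · rw [if_pos hjk]
      have hlj : 0 < lam j := hpos j hj.1 (le_trans hjk hkN)
      have : Qk < lam j := lt_of_lt_of_le hhigh (hanti j k hj.1 hjk hkN)
      have : Qk / lam j < 1 := (div_lt_one hlj).mpr this
      linarith
    · rw [if_neg hjk]
  -- splitting sums over Icc 1 N
  have hsplit : ∀ f : ℕ → ℝ, ∑ i ∈ Finset.Icc 1 N, f i
      = ∑ i ∈ Finset.Icc 1 k, f i + ∑ i ∈ Finset.Icc (k+1) N, f i := by
    intro f
    have h0 : Finset.Icc 1 N = Finset.Ioc 0 N := by rw [← Finset.Icc_add_one_left_eq_Ioc]; rfl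
    have h1 : Finset.Icc 1 k = Finset.Ioc 0 k := by rw [← Finset.Icc_add_one_left_eq_Ioc]; rfl
    have h2 : Finset.Icc (k+1) N = Finset.Ioc k N := by rw [← Finset.Icc_add_one_left_eq_Ioc]
    rw [h0, h1, h2]
    exact (Finset.sum_Ioc_consecutive f (Nat.zero_le k) hkN).symm
  -- sum of zstar equals 1
  have hsum1 : ∑ j ∈ Finset.Icc 1 k, zstar j = 1 := by
    have h1 : ∑ j ∈ Finset.Icc 1 k, zstar j
        = ∑ j ∈ Finset.Icc 1 k, (1 - Qk * (lam j)⁻¹) := by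
      apply Finset.sum_congr rfl
      intro j hj
      simp only [Finset.mem_Icc] at hj
      rw [hzstar j hj.1 (le_trans hj.2 hkN), if_pos hj.2, div_eq_mul_inv]
    rw [h1, Finset.sum_sub_distrib, ← Finset.mul_sum, Finset.sum_const,
      Nat.card_Icc, hQk, div_mul_cancel₀ _ (ne_of_gt hSpos)]
    simp
  have hsum2 : ∑ j ∈ Finset.Icc (k+1) N, zstar j = 0 := by
    apply Finset.sum_eq_zero
    intro j hj
    simp only [Finset.mem_Icc] at hj
    rw [hzstar j (by omega) hj.2, if_neg (by omega)]
  have hzsum : ∑ j ∈ Finset.Icc 1 N, zstar j = 1 := by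
    rw [hsplit, hsum1, hsum2]; ring
  refine ⟨hnn, hzsum, ?_⟩
  intro z hznn hzs
  -- the key decomposition
  set A : ℝ := ∑ i ∈ Finset.Icc (k+1) N, (lam i - Qk) * z i with hA_def
  set B : ℝ := ∑ i ∈ Finset.Icc 1 N, lam i / 2 * (z i - zstar i) ^ 2 with hB_def
  have key : ∀ i ∈ Finset.Icc 1 N,
      lam i * z i - lam i / 2 * (z i) ^ 2
      = (lam i * zstar i - lam i / 2 * (zstar i) ^ 2)
        + (Qk * (z i - zstar i)
          + ((if k + 1 ≤ i then (lam i - Qk) * z i else 0)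
            - lam i / 2 * (z i - zstar i) ^ 2)) := by
    intro i hi
    simp only [Finset.mem_Icc] at hi
    by_cases hik : i ≤ k
    · rw [if_neg (by omega)]
      have hli : lam i ≠ 0 := ne_of_gt (hpos i hi.1 hi.2)
      have hzi : zstar i = 1 - Qk / lam i := by
        rw [hzstar i hi.1 hi.2, if_pos hik]
      have hLw : lam i * zstar i = lam i - Qk := by
        rw [hzi]; field_simp
      linear_combination (zstar i - z i) * hLw
    · rw [if_pos (by omega)]
      have hzi : zstar i = 0 := by
        rw [hzstar i hi.1 hi.2, if_neg hik]
      rw [hzi]; ring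
  have hfilter : (Finset.Icc 1 N).filter (fun i => k + 1 ≤ i) = Finset.Icc (k+1) N := by
    ext i
    simp only [Finset.mem_filter, Finset.mem_Icc]
    omega
  have hA_eq : ∑ i ∈ Finset.Icc 1 N, (if k + 1 ≤ i then (lam i - Qk) * z i else 0) = A := by
    rw [hA_def, Finset.sum_ite, Finset.sum_const_zero, add_zero, hfilter]
  have hzero : ∑ i ∈ Finset.Icc 1 N, Qk * (z i - zstar i) = 0 := by
    rw [← Finset.mul_sum, Finset.sum_sub_distrib, hzs, hzsum]
    ring
  have E : (∑ i ∈ Finset.Icc 1 N, (lam i * z i - lam i / 2 * (z i) ^ 2))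
      = (∑ i ∈ Finset.Icc 1 N, (lam i * zstar i - lam i / 2 * (zstar i) ^ 2)) + (A - B) := by
    rw [Finset.sum_congr rfl key]
    simp only [Finset.sum_add_distrib, Finset.sum_sub_distrib]
    rw [hA_eq, hzero, ← hB_def]
    ring
  have hA_nonpos : A ≤ 0 := by
    rw [hA_def]
    apply Finset.sum_nonpos
    intro i hi
    simp only [Finset.mem_Icc] at hi
    have hk1N : k + 1 ≤ N := le_trans hi.1 hi.2
    have hQ : lam (k+1) < Qk := by rwa [if_pos hk1N] at hlow
    have : lam i ≤ lam (k+1) := hanti (k+1) i (by omega) hi.1 hi.2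
    have hzi : 0 ≤ z i := hznn i (by simp [Finset.mem_Icc]; omega)
    exact mul_nonpos_of_nonpos_of_nonneg (by linarith) hzi
  have hB_nonneg : 0 ≤ B := by
    rw [hB_def]
    apply Finset.sum_nonneg
    intro i hi
    simp only [Finset.mem_Icc] at hi
    have := hpos i hi.1 hi.2
    positivity
  constructor
  · rw [E]; linarith
  · constructor
    · intro heq
      have hAB : A - B = 0 := by rw [E] at heq; linarith
      have hB0 : B = 0 := by linarith
      have := (Finset.sum_eq_zero_iff_of_nonneg (by
        intro i hi
        simp only [Finset.mem_Icc] at hi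
        have := hpos i hi.1 hi.2
        positivity)).mp hB0
      intro j hj
      have hterm := this j hj
      simp only [Finset.mem_Icc] at hj
      have hlj : 0 < lam j := hpos j hj.1 hj.2
      have hsq : (z j - zstar j) ^ 2 = 0 := by
        rcases mul_eq_zero.mp hterm with h | h
        · exfalso; linarith
        · exact h
      have h2 : z j - zstar j = 0 := by
        have := sq_nonneg (z j - zstar j)
        nlinarith
      linarith
    · intro hzz
      apply Finset.sum_congr rfl
      intro i hi
      rw [hzz i hi]
end

section
/- The three-dimensional Lebesgue measure of the set {(x, y, z) ∈ ℝ³ : 0 < z < y < x < 1 and z·(x + y) < x·y} equals (1 − ln 2)/3; equivalently, multiplying by 3! = 6, the probability that exactly 2 species coexist in an invader-driven replicator system whose 3 invasion fitnesses are i.i.d. uniform on [0,1] equals 2 − 2·ln 2. -/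
open MeasureTheory Set

private lemma inner_int {x : ℝ} (hx : 0 < x) :
    ∫ y in Ioo 0 x, x * y / (x + y) = x ^ 2 * (1 - Real.log 2) := by
  rw [← integral_Ioc_eq_integral_Ioo, ← intervalIntegral.integral_of_le hx.le]
  have key : ∀ y ∈ Set.uIcc 0 x, HasDerivAt (fun y => x * y - x ^ 2 * Real.log (x + y))
      (x * y / (x + y)) y := by
    intro y hy
    rw [Set.uIcc_of_le hx.le] at hy
    have hxy : 0 < x + y := by linarith [hy.1]
    have h1 : HasDerivAt (fun y : ℝ => x * y) x y := by
      simpa using (hasDerivAt_id y).const_mul x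
    have h2 : HasDerivAt (fun y : ℝ => Real.log (x + y)) (1 / (x + y)) y := by
      simpa using (HasDerivAt.const_add x (hasDerivAt_id y)).log hxy.ne'
    have h3 := h1.sub (h2.const_mul (x ^ 2))
    refine h3.congr_deriv ?_
    field_simp
    ring
  have hcont : ContinuousOn (fun y => x * y / (x + y)) (Set.uIcc 0 x) := by
    apply ContinuousOn.div (by fun_prop) (by fun_prop)
    intro y hy
    rw [Set.uIcc_of_le hx.le] at hy
    have : 0 < x + y := by linarith [hy.1]
    exact this.ne'
  rw [intervalIntegral.integral_eq_sub_of_hasDerivAt key hcont.intervalIntegrable]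
  have hlog : Real.log (x + x) = Real.log 2 + Real.log x := by
    rw [show x + x = 2 * x by ring, Real.log_mul two_ne_zero hx.ne']
  simp only [add_zero, mul_zero, hlog]
  ring

/-- The Lebesgue measure of
`{(x,y,z) : 0 < z < y < x < 1, z(x+y) < xy}` is `(1 - ln 2)/3`; multiplying by `3! = 6`,
the probability that exactly 2 of 3 i.i.d. uniform-[0,1]-fitness species coexist in the
invader-driven replicator equals `2 - 2 ln 2`. -/
theorem stmt_12 :
    MeasureTheory.volume {p : ℝ × ℝ × ℝ |
        0 < p.2.2 ∧ p.2.2 < p.2.1 ∧ p.2.1 < p.1 ∧ p.1 < 1 ∧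
        p.2.2 * (p.1 + p.2.1) < p.1 * p.2.1} =
      ENNReal.ofReal ((1 - Real.log 2) / 3) := by
  set S : Set (ℝ × ℝ × ℝ) := {p : ℝ × ℝ × ℝ |
        0 < p.2.2 ∧ p.2.2 < p.2.1 ∧ p.2.1 < p.1 ∧ p.1 < 1 ∧
        p.2.2 * (p.1 + p.2.1) < p.1 * p.2.1} with hS
  have hSopen : IsOpen S := by
    rw [hS, setOf_and, setOf_and, setOf_and, setOf_and]
    exact (isOpen_lt (by fun_prop) (by fun_prop)).inter
      ((isOpen_lt (by fun_prop) (by fun_prop)).inter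
      ((isOpen_lt (by fun_prop) (by fun_prop)).inter
      ((isOpen_lt (by fun_prop) (by fun_prop)).inter
      (isOpen_lt (by fun_prop) (by fun_prop)))))
  have hSm : MeasurableSet S := hSopen.measurableSet
  rw [MeasureTheory.Measure.volume_eq_prod, MeasureTheory.Measure.prod_apply hSm]
  have hslice : ∀ x : ℝ, volume (Prod.mk x ⁻¹' S) =
      (Ioo (0:ℝ) 1).indicator (fun x => ENNReal.ofReal (x ^ 2 * (1 - Real.log 2))) x := by
    intro x
    by_cases hx : x ∈ Ioo (0:ℝ) 1
    · rw [indicator_of_mem hx]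
      have hx0 : 0 < x := hx.1
      have hset : Prod.mk x ⁻¹' S =
          regionBetween (fun _ => (0:ℝ)) (fun y => x * y / (x + y)) (Ioo 0 x) := by
        ext ⟨y, z⟩
        simp only [hS, regionBetween, mem_preimage, mem_setOf_eq, mem_Ioo, Pi.zero_apply]
        constructor
        · rintro ⟨hz, hzy, hyx, hx1, hq⟩
          have hxy : 0 < x + y := by linarith
          exact ⟨⟨lt_trans hz hzy, hyx⟩, hz, (lt_div_iff₀ hxy).mpr (by linarith)⟩
        · rintro ⟨⟨hy0, hyx⟩, hz0, hzf⟩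
          have hxy : 0 < x + y := by linarith
          have hq : z * (x + y) < x * y := (lt_div_iff₀ hxy).mp hzf
          have hfy : x * y / (x + y) < y := by
            rw [div_lt_iff₀ hxy]; nlinarith
          exact ⟨hz0, lt_trans hzf hfy, hyx, hx.2, hq⟩
      rw [hset]
      have hg_int : IntegrableOn (fun y => x * y / (x + y)) (Ioo 0 x) := by
        apply IntegrableOn.mono_set (ContinuousOn.integrableOn_Icc ?_) Ioo_subset_Icc_self
        apply ContinuousOn.div (by fun_prop) (by fun_prop)
        intro y hy
        have : 0 < x + y := by linarith [hy.1]
        exact this.ne'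
      have hfg : ∀ y ∈ Ioo (0:ℝ) x, (fun _ => (0:ℝ)) y ≤ x * y / (x + y) := by
        intro y hy
        have hxy : 0 < x + y := by linarith [hy.1]
        exact div_nonneg (by nlinarith [hy.1]) hxy.le
      rw [MeasureTheory.Measure.volume_eq_prod, volume_regionBetween_eq_integral (integrableOn_zero) hg_int measurableSet_Ioo hfg]
      simp only [Pi.sub_apply, sub_zero]
      rw [inner_int hx0]
    · rw [indicator_of_notMem hx]
      have hempty : Prod.mk x ⁻¹' S = ∅ := by
        rw [eq_empty_iff_forall_notMem]
        rintro ⟨y, z⟩ ⟨hz, hzy, hyx, hx1, _⟩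
        exact hx ⟨by linarith, hx1⟩
      rw [hempty, measure_empty]
  rw [lintegral_congr hslice, lintegral_indicator measurableSet_Ioo]
  have hint : IntegrableOn (fun x : ℝ => x ^ 2 * (1 - Real.log 2)) (Ioo 0 1) := by
    exact IntegrableOn.mono_set ((continuous_pow 2).continuousOn.mul
      continuousOn_const).integrableOn_Icc Ioo_subset_Icc_self
  have hnn : 0 ≤ᵐ[volume.restrict (Ioo (0:ℝ) 1)] fun x : ℝ => x ^ 2 * (1 - Real.log 2) := by
    apply Filter.Eventually.of_forall
    intro x
    simp only [Pi.zero_apply]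
    have h2 : Real.log 2 < 1 := by
      nlinarith [Real.log_two_lt_d9]
    nlinarith [sq_nonneg x]
  rw [← ofReal_integral_eq_lintegral_ofReal hint hnn]
  congr 1
  rw [← integral_Ioc_eq_integral_Ioo, ← intervalIntegral.integral_of_le zero_le_one,
    intervalIntegral.integral_mul_const, integral_pow]
  norm_num
  ring
end

section
/- The four-dimensional Lebesgue measure of the set {(x, y, z, w) ∈ ℝ⁴ : 0 < w < z < y < x < 1 and z·(x + y) < x·y} equals (9/2 − 6·ln 2)/24; equivalently, multiplying by 4! = 24, the probability that exactly 2 species coexist in an invader-driven replicator system whose 4 invasion fitnesses are i.i.d. uniform on [0,1] equals 9/2 − 6·ln 2. -/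
open MeasureTheory Set intervalIntegral

-- z-level integral
lemma z_integral (x y : ℝ) :
    ∫⁻ z : ℝ, (if z < y ∧ y < x ∧ x < 1 ∧ z * (x + y) < x * y then ENNReal.ofReal z else 0)
      = if 0 < y ∧ y < x ∧ x < 1 then ENNReal.ofReal ((x * y / (x + y)) ^ 2 / 2) else 0 := by
  by_cases h : 0 < y ∧ y < x ∧ x < 1
  · obtain ⟨hy, hyx, hx1⟩ := h
    have hxy : (0:ℝ) < x + y := by linarith
    set m := x * y / (x + y) with hm
    have hm0 : 0 < m := div_pos (mul_pos (by linarith) hy) hxy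
    have hmy : m < y := by
      rw [hm, div_lt_iff₀ hxy]; nlinarith
    have hpt : (fun z : ℝ =>
        if z < y ∧ y < x ∧ x < 1 ∧ z * (x + y) < x * y then ENNReal.ofReal z else 0)
        = (Ioo (0:ℝ) m).indicator (fun z => ENNReal.ofReal z) := by
      funext z
      by_cases hz : z ∈ Ioo (0:ℝ) m
      · obtain ⟨hz0, hzm⟩ := hz
        rw [indicator_of_mem (show z ∈ Ioo (0:ℝ) m from ⟨hz0, hzm⟩), if_pos]
        refine ⟨lt_trans hzm hmy, hyx, hx1, ?_⟩
        have := (lt_div_iff₀ hxy).mp hzm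
        linarith
      · rw [indicator_of_notMem hz]
        by_cases hc : z < y ∧ y < x ∧ x < 1 ∧ z * (x + y) < x * y
        · rw [if_pos hc]
          have hzle : z ≤ 0 := by
            by_contra hz0
            push_neg at hz0
            exact hz ⟨hz0, (lt_div_iff₀ hxy).mpr hc.2.2.2⟩
          simp [ENNReal.ofReal_eq_zero.2 hzle]
        · rw [if_neg hc]
    rw [if_pos ⟨hy, hyx, hx1⟩, hpt, lintegral_indicator measurableSet_Ioo]
    rw [← ofReal_integral_eq_lintegral_ofReal]
    · congr 1
      rw [← integral_Ioc_eq_integral_Ioo, ← integral_of_le hm0.le]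
      simp [integral_id]
    · exact (continuous_id.integrableOn_Ioc).mono_set Ioo_subset_Ioc_self
    · exact ae_restrict_of_forall_mem measurableSet_Ioo (fun z hz => hz.1.le)
  · rw [if_neg h]
    have hpt : ∀ z : ℝ,
        (if z < y ∧ y < x ∧ x < 1 ∧ z * (x + y) < x * y then ENNReal.ofReal z else 0) = 0 := by
      intro z
      by_cases hc : z < y ∧ y < x ∧ x < 1 ∧ z * (x + y) < x * y
      · rw [if_pos hc]
        have hy0 : ¬ 0 < y := fun hy => h ⟨hy, hc.2.1, hc.2.2.1⟩
        push_neg at hy0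
        exact ENNReal.ofReal_eq_zero.2 (le_trans hc.1.le hy0)
      · rw [if_neg hc]
    simp only [hpt, lintegral_zero]

-- the real y-integral via FTC
lemma y_real_integral {x : ℝ} (hx : 0 < x) :
    ∫ y in (0:ℝ)..x, (x * y / (x + y)) ^ 2 / 2 = x ^ 3 * (3 / 4 - Real.log 2) := by
  have hF : ∀ y ∈ uIcc (0:ℝ) x,
      HasDerivAt (fun y : ℝ => x ^ 2 / 2 * (y - 2 * x * Real.log (x + y) - x ^ 2 / (x + y)))
        ((x * y / (x + y)) ^ 2 / 2) y := by
    intro y hy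
    rw [uIcc_of_le hx.le] at hy
    have hxy : (0:ℝ) < x + y := by have := hy.1; linarith
    have h1 : HasDerivAt (fun y : ℝ => x + y) 1 y := by
      simpa using (hasDerivAt_id y).const_add x
    have hlog : HasDerivAt (fun y : ℝ => Real.log (x + y)) (1 / (x + y)) y := by
      simpa using h1.log hxy.ne'
    have hinv : HasDerivAt (fun y : ℝ => x ^ 2 / (x + y)) (-(x ^ 2) / (x + y) ^ 2) y := by
      have := (h1.inv hxy.ne').const_mul (x ^ 2)
      simpa [div_eq_mul_inv, neg_div, mul_div_assoc] using this
    have : HasDerivAt (fun y : ℝ => x ^ 2 / 2 * (y - 2 * x * Real.log (x + y) - x ^ 2 / (x + y)))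
        (x ^ 2 / 2 * (1 - 2 * x * (1 / (x + y)) - -(x ^ 2) / (x + y) ^ 2)) y := by
      exact (((hasDerivAt_id y).sub ((hlog.const_mul (2 * x)))).sub hinv).const_mul (x ^ 2 / 2)
    convert this using 1
    field_simp
    ring
  have hint : IntervalIntegrable (fun y : ℝ => (x * y / (x + y)) ^ 2 / 2) volume 0 x := by
    apply ContinuousOn.intervalIntegrable
    apply ContinuousOn.div_const
    apply ContinuousOn.pow
    apply ContinuousOn.div (continuousOn_const.mul continuousOn_id) (continuousOn_const.add continuousOn_id)
    intro y hy
    rw [uIcc_of_le hx.le] at hy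
    have := hy.1
    exact (by linarith : (0:ℝ) < x + y).ne'
  rw [integral_eq_sub_of_hasDerivAt hF hint]
  have hlog2x : Real.log (x + x) = Real.log 2 + Real.log x := by
    rw [show x + x = 2 * x by ring, Real.log_mul (by norm_num) hx.ne']
  simp only [hlog2x, add_zero, Real.log_zero]
  field_simp
  ring

lemma y_integral (x : ℝ) :
    ∫⁻ y : ℝ, (if 0 < y ∧ y < x ∧ x < 1 then ENNReal.ofReal ((x * y / (x + y)) ^ 2 / 2) else 0)
      = if 0 < x ∧ x < 1 then ENNReal.ofReal (x ^ 3 * (3 / 4 - Real.log 2)) else 0 := by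
  by_cases h : 0 < x ∧ x < 1
  · obtain ⟨hx, hx1⟩ := h
    have hpt : (fun y : ℝ =>
        if 0 < y ∧ y < x ∧ x < 1 then ENNReal.ofReal ((x * y / (x + y)) ^ 2 / 2) else 0)
        = (Ioo (0:ℝ) x).indicator (fun y => ENNReal.ofReal ((x * y / (x + y)) ^ 2 / 2)) := by
      funext y
      by_cases hy : y ∈ Ioo (0:ℝ) x
      · rw [indicator_of_mem hy, if_pos ⟨hy.1, hy.2, hx1⟩]
      · rw [indicator_of_notMem hy, if_neg]
        intro hc
        exact hy ⟨hc.1, hc.2.1⟩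
    rw [if_pos ⟨hx, hx1⟩, hpt, lintegral_indicator measurableSet_Ioo]
    rw [← ofReal_integral_eq_lintegral_ofReal]
    · rw [← integral_Ioc_eq_integral_Ioo, ← integral_of_le hx.le, y_real_integral hx]
    · have : IntervalIntegrable (fun y : ℝ => (x * y / (x + y)) ^ 2 / 2) volume 0 x := by
        apply ContinuousOn.intervalIntegrable
        apply ContinuousOn.div_const
        apply ContinuousOn.pow
        apply ContinuousOn.div (continuousOn_const.mul continuousOn_id)
          (continuousOn_const.add continuousOn_id)
        intro y hy
        rw [uIcc_of_le hx.le] at hy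
        have := hy.1
        exact (by linarith : (0:ℝ) < x + y).ne'
      have := this.1
      rw [integrableOn_Ioc_iff_integrableOn_Ioo] at this
      exact this
    · exact ae_restrict_of_forall_mem measurableSet_Ioo (fun y _ => by positivity)
  · rw [if_neg h]
    have hpt : ∀ y : ℝ,
        (if 0 < y ∧ y < x ∧ x < 1 then ENNReal.ofReal ((x * y / (x + y)) ^ 2 / 2) else 0) = 0 := by
      intro y
      rw [if_neg]
      intro hc
      exact h ⟨lt_trans hc.1 hc.2.1, hc.2.2⟩
    simp only [hpt, lintegral_zero]

lemma x_integral :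
    ∫⁻ x : ℝ, (if 0 < x ∧ x < 1 then ENNReal.ofReal (x ^ 3 * (3 / 4 - Real.log 2)) else 0)
      = ENNReal.ofReal ((9 / 2 - 6 * Real.log 2) / 24) := by
  have hlog2 : Real.log 2 < 3 / 4 := by
    have := Real.log_two_lt_d9
    linarith
  have hpt : (fun x : ℝ =>
      if 0 < x ∧ x < 1 then ENNReal.ofReal (x ^ 3 * (3 / 4 - Real.log 2)) else 0)
      = (Ioo (0:ℝ) 1).indicator (fun x => ENNReal.ofReal (x ^ 3 * (3 / 4 - Real.log 2))) := by
    funext x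
    by_cases hx : x ∈ Ioo (0:ℝ) 1
    · rw [indicator_of_mem hx, if_pos ⟨hx.1, hx.2⟩]
    · rw [indicator_of_notMem hx, if_neg (fun hc => hx ⟨hc.1, hc.2⟩)]
  rw [hpt, lintegral_indicator measurableSet_Ioo, ← ofReal_integral_eq_lintegral_ofReal]
  · congr 1
    rw [← integral_Ioc_eq_integral_Ioo, ← integral_of_le (by norm_num : (0:ℝ) ≤ 1)]
    have : ∫ x in (0:ℝ)..1, x ^ 3 * (3 / 4 - Real.log 2)
        = (∫ x in (0:ℝ)..1, x ^ 3) * (3 / 4 - Real.log 2) := by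
      rw [← intervalIntegral.integral_mul_const]
    rw [this, integral_pow]
    norm_num
    ring
  · have : IntervalIntegrable (fun x : ℝ => x ^ 3 * (3 / 4 - Real.log 2)) volume 0 1 :=
      (continuous_pow 3).continuousOn.mul continuousOn_const |>.intervalIntegrable
    have := this.1
    rw [integrableOn_Ioc_iff_integrableOn_Ioo] at this
    exact this
  · refine ae_restrict_of_forall_mem measurableSet_Ioo (fun x hx => ?_)
    exact mul_nonneg (pow_nonneg hx.1.le 3) (by linarith)


/-- The Lebesgue measure of
`{(x,y,z,w) : 0 < w < z < y < x < 1, z(x+y) < xy}` is `(9/2 - 6 ln 2)/24`; multiplying by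
`4! = 24`, the probability that exactly 2 of 4 i.i.d. uniform-[0,1]-fitness species
coexist in the invader-driven replicator equals `9/2 - 6 ln 2`. -/
theorem stmt_14 :
    MeasureTheory.volume {p : ℝ × ℝ × ℝ × ℝ |
        0 < p.2.2.2 ∧ p.2.2.2 < p.2.2.1 ∧ p.2.2.1 < p.2.1 ∧ p.2.1 < p.1 ∧ p.1 < 1 ∧
        p.2.2.1 * (p.1 + p.2.1) < p.1 * p.2.1} =
      ENNReal.ofReal ((9 / 2 - 6 * Real.log 2) / 24) := by
  set S : Set (ℝ × ℝ × ℝ × ℝ) := {p : ℝ × ℝ × ℝ × ℝ |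
        0 < p.2.2.2 ∧ p.2.2.2 < p.2.2.1 ∧ p.2.2.1 < p.2.1 ∧ p.2.1 < p.1 ∧ p.1 < 1 ∧
        p.2.2.1 * (p.1 + p.2.1) < p.1 * p.2.1} with hSdef
  have hS : MeasurableSet S := by
    have hx : Measurable fun p : ℝ × ℝ × ℝ × ℝ => p.1 := measurable_fst
    have hy : Measurable fun p : ℝ × ℝ × ℝ × ℝ => p.2.1 := measurable_snd.fst
    have hz : Measurable fun p : ℝ × ℝ × ℝ × ℝ => p.2.2.1 := measurable_snd.snd.fst
    have hw : Measurable fun p : ℝ × ℝ × ℝ × ℝ => p.2.2.2 := measurable_snd.snd.snd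
    rw [hSdef]
    simp only [Set.setOf_and]
    exact (measurableSet_lt measurable_const hw).inter
      ((measurableSet_lt hw hz).inter ((measurableSet_lt hz hy).inter
        ((measurableSet_lt hy hx).inter ((measurableSet_lt hx measurable_const).inter
          (measurableSet_lt (hz.mul (hx.add hy)) (hx.mul hy))))))
  rw [show (volume : Measure (ℝ × ℝ × ℝ × ℝ)) = (volume : Measure ℝ).prod volume from rfl,
    Measure.prod_apply hS]
  have h1 : ∀ x : ℝ, volume (Prod.mk x ⁻¹' S)
      = if 0 < x ∧ x < 1 then ENNReal.ofReal (x ^ 3 * (3 / 4 - Real.log 2)) else 0 := by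
    intro x
    have hT : MeasurableSet (Prod.mk x ⁻¹' S) := hS.preimage measurable_prodMk_left
    rw [show (volume : Measure (ℝ × ℝ × ℝ)) = (volume : Measure ℝ).prod volume from rfl,
      Measure.prod_apply hT]
    have h2 : ∀ y : ℝ, volume (Prod.mk y ⁻¹' (Prod.mk x ⁻¹' S))
        = if 0 < y ∧ y < x ∧ x < 1 then ENNReal.ofReal ((x * y / (x + y)) ^ 2 / 2) else 0 := by
      intro y
      have hU : MeasurableSet (Prod.mk y ⁻¹' (Prod.mk x ⁻¹' S)) :=
        hT.preimage measurable_prodMk_left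
      rw [show (volume : Measure (ℝ × ℝ)) = (volume : Measure ℝ).prod volume from rfl,
        Measure.prod_apply hU]
      have h3 : ∀ z : ℝ, volume (Prod.mk z ⁻¹' (Prod.mk y ⁻¹' (Prod.mk x ⁻¹' S)))
          = if z < y ∧ y < x ∧ x < 1 ∧ z * (x + y) < x * y then ENNReal.ofReal z else 0 := by
        intro z
        have hset : Prod.mk z ⁻¹' (Prod.mk y ⁻¹' (Prod.mk x ⁻¹' S))
            = {w : ℝ | 0 < w ∧ w < z ∧ z < y ∧ y < x ∧ x < 1 ∧ z * (x + y) < x * y} := rfl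
        rw [hset]
        by_cases hc : z < y ∧ y < x ∧ x < 1 ∧ z * (x + y) < x * y
        · rw [if_pos hc]
          have : {w : ℝ | 0 < w ∧ w < z ∧ z < y ∧ y < x ∧ x < 1 ∧ z * (x + y) < x * y}
              = Ioo 0 z := by
            ext w
            simp only [mem_setOf_eq, mem_Ioo]
            exact ⟨fun h => ⟨h.1, h.2.1⟩, fun h => ⟨h.1, h.2, hc.1, hc.2.1, hc.2.2.1, hc.2.2.2⟩⟩
          rw [this, Real.volume_Ioo, sub_zero]
        · rw [if_neg hc]
          have : {w : ℝ | 0 < w ∧ w < z ∧ z < y ∧ y < x ∧ x < 1 ∧ z * (x + y) < x * y}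
              = (∅ : Set ℝ) := by
            ext w
            simp only [mem_setOf_eq, mem_empty_iff_false, iff_false, not_and]
            intro _ _ h3 h4 h5 h6
            exact hc ⟨h3, h4, h5, h6⟩
          rw [this, measure_empty]
      rw [lintegral_congr h3, z_integral]
    rw [lintegral_congr h2, y_integral]
  rw [lintegral_congr h1, x_integral]
end

section
/- Let k ≥ 2 and let λ₁, …, λ_k be nonzero real numbers with Σ_{i=1}^k 1/λ_i ≠ 0. Set Q = (k − 1)/Σ_{i=1}^k (1/λ_i) and z_i = 1 − Q/λ_i (so Σ_{i=1}^k z_i = 1), and define the k×k matrix A by A_{ii} = −2·λ_i·z_i·(1 − z_i) and A_{ij} = −λ_j·z_i·(1 − 2·z_j) for j ≠ i. Then Σ_{i,j=1}^k A_{ij} = −k·Q. In particular, if all λ_i < 0 then Q < 0, so with u the all-ones vector uᵀAu = −kQ > 0, and hence the symmetric part of A has a positive eigenvalue (every interior k-species equilibrium of the negative invader-driven replicator is linearly unstable). -/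
open Matrix in
lemma stmt_18_aux {k : ℕ} (S : Matrix (Fin k) (Fin k) ℝ) (hH : S.IsHermitian)
    (x : Fin k → ℝ) (hx : 0 < x ⬝ᵥ (S *ᵥ x)) :
    ∃ μ : ℝ, 0 < μ ∧ Module.End.HasEigenvalue (Matrix.toLin' S) μ := by
  classical
  set V : Matrix (Fin k) (Fin k) ℝ := (hH.eigenvectorUnitary : Matrix (Fin k) (Fin k) ℝ) with hV
  set c : Fin k → ℝ := Vᵀ *ᵥ x with hc
  have hST := hH.spectral_theorem
  have hq : x ⬝ᵥ (S *ᵥ x) = ∑ i, hH.eigenvalues i * (c i)^2 := by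
    conv_lhs => rw [hST]
    rw [Unitary.conjStarAlgAut_apply, star_eq_conjTranspose, conjTranspose_eq_transpose_of_trivial,
      ← Matrix.mulVec_mulVec, ← Matrix.mulVec_mulVec, dotProduct_mulVec,
      ← Matrix.mulVec_transpose]
    simp only [← hc, Matrix.mulVec_diagonal, dotProduct, Function.comp]
    refine Finset.sum_congr rfl fun i _ => by
      simp [RCLike.ofReal]; ring
  have hex : ∃ i, 0 < hH.eigenvalues i := by
    by_contra h
    push_neg at h
    have : x ⬝ᵥ (S *ᵥ x) ≤ 0 := by
      rw [hq]
      exact Finset.sum_nonpos fun i _ =>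
        mul_nonpos_of_nonpos_of_nonneg (h i) (sq_nonneg _)
    linarith
  obtain ⟨i, hi⟩ := hex
  refine ⟨hH.eigenvalues i, hi, ?_⟩
  have h2 : Matrix.toLin' S = Matrix.toLinAlgEquiv' S := by
    ext v; simp [Matrix.toLinAlgEquiv'_apply]
  rw [Module.End.hasEigenvalue_iff_mem_spectrum, h2, AlgEquiv.spectrum_eq]
  exact hH.eigenvalues_mem_spectrum_real i

/-- For `k ≥ 2`, nonzero `λ_i` with `Σ 1/λ_i ≠ 0`,
`Q = (k-1)/Σ 1/λ_i`, `z_i = 1 - Q/λ_i` (so `Σ z_i = 1`), and the interior Jacobian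
block `A` with `A_{ii} = -2λ_i z_i (1-z_i)`, `A_{ij} = -λ_j z_i (1-2z_j)`, one has
`Σ_{i,j} A_{ij} = -kQ`. In particular, if all `λ_i < 0` then `Q < 0`, so with `u` the
all-ones vector `uᵀAu = -kQ > 0`, whence the symmetric part of `A` has a positive
eigenvalue (interior equilibria of the negative invader-driven replicator are
linearly unstable). -/
theorem stmt_18 (k : ℕ) (hk : 2 ≤ k) (lam : Fin k → ℝ)
    (hne : ∀ i, lam i ≠ 0) (hS : ∑ i, (lam i)⁻¹ ≠ 0) :
    let Q : ℝ := ((k : ℝ) - 1) / ∑ i, (lam i)⁻¹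
    let z : Fin k → ℝ := fun i => 1 - Q / lam i
    let A : Matrix (Fin k) (Fin k) ℝ := fun i j =>
      if i = j then -2 * lam i * z i * (1 - z i)
      else -lam j * z i * (1 - 2 * z j)
    (∑ i, z i = 1) ∧
    (∑ i, ∑ j, A i j = -(k : ℝ) * Q) ∧
    ((∀ i, lam i < 0) →
      Q < 0 ∧ 0 < -(k : ℝ) * Q ∧
        ∃ μ : ℝ, 0 < μ ∧
          Module.End.HasEigenvalue
            (Matrix.toLin' ((1 / 2 : ℝ) • (A + A.transpose))) μ) := by
  classical
  intro Q z A
  have hkpos : 0 < k := by omega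
  haveI : Nonempty (Fin k) := Fin.pos_iff_nonempty.mp hkpos
  have hQ : Q * ∑ i, (lam i)⁻¹ = (k : ℝ) - 1 :=
    div_mul_cancel₀ _ hS
  have hz1 : ∑ i, z i = 1 := by
    have h1 : ∑ i, z i = (k : ℝ) - Q * ∑ i, (lam i)⁻¹ := by
      simp only [z, div_eq_mul_inv]
      rw [Finset.sum_sub_distrib, Finset.mul_sum]
      simp
    rw [h1, hQ]; ring
  have hlz : ∀ i, lam i * z i = lam i - Q := by
    intro i
    show lam i * (1 - Q / lam i) = lam i - Q
    rw [mul_sub, mul_one, mul_div_cancel₀ _ (hne i)]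
  set L : ℝ := ∑ i, lam i with hL
  have hT : ∑ j, lam j * (1 - 2 * z j) = 2 * (k : ℝ) * Q - L := by
    have h2 : ∀ j, lam j * (1 - 2 * z j) = 2 * Q - lam j := fun j => by
      linear_combination (-2) * hlz j
    rw [Finset.sum_congr rfl fun j _ => h2 j, Finset.sum_sub_distrib]
    simp [hL, Finset.card_univ]
    ring
  have hLZ : ∑ i, lam i * z i = L - (k : ℝ) * Q := by
    rw [Finset.sum_congr rfl fun i _ => hlz i, Finset.sum_sub_distrib]
    simp [hL, Finset.card_univ]
  have hrow : ∀ i : Fin k, ∑ j, A i j =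
      -(z i * ∑ j, lam j * (1 - 2 * z j)) - lam i * z i := by
    intro i
    have h3 : ∀ j, A i j = -lam j * z i * (1 - 2 * z j)
        + (if i = j then -(lam i * z i) else 0) := by
      intro j
      by_cases h : i = j
      · subst h; simp [A]; ring
      · simp [A, h]
    rw [Finset.sum_congr rfl fun j _ => h3 j, Finset.sum_add_distrib,
      Finset.sum_ite_eq Finset.univ i (fun _ => -(lam i * z i))]
    have h4 : ∑ j, -lam j * z i * (1 - 2 * z j)
        = -(z i * ∑ j, lam j * (1 - 2 * z j)) := by
      rw [Finset.mul_sum, ← Finset.sum_neg_distrib]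
      exact Finset.sum_congr rfl fun j _ => by ring
    rw [h4]
    simp
    ring
  have hAsum : ∑ i, ∑ j, A i j = -(k : ℝ) * Q := by
    rw [Finset.sum_congr rfl fun i _ => hrow i, Finset.sum_sub_distrib,
      Finset.sum_neg_distrib, ← Finset.sum_mul, hz1, hT, hLZ]
    ring
  refine ⟨hz1, hAsum, fun hneg => ?_⟩
  have hsum_neg : ∑ i, (lam i)⁻¹ < 0 :=
    Finset.sum_neg (fun i _ => inv_neg''.mpr (hneg i)) Finset.univ_nonempty
  have hk1 : (0 : ℝ) < (k : ℝ) - 1 := by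
    have : (2 : ℝ) ≤ (k : ℝ) := by exact_mod_cast hk
    linarith
  have hQneg : Q < 0 := div_neg_of_pos_of_neg hk1 hsum_neg
  have hkR : (0 : ℝ) < (k : ℝ) := by exact_mod_cast hkpos
  have hkQ : 0 < -(k : ℝ) * Q := by nlinarith
  refine ⟨hQneg, hkQ, ?_⟩
  have hH : ((1 / 2 : ℝ) • (A + A.transpose)).IsHermitian := by
    rw [Matrix.IsHermitian, Matrix.conjTranspose_eq_transpose_of_trivial,
      Matrix.transpose_smul, Matrix.transpose_add, Matrix.transpose_transpose,
      add_comm]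
  refine stmt_18_aux _ hH (fun _ => 1) ?_
  have e1 : dotProduct (fun _ => (1:ℝ))
      (((1 / 2 : ℝ) • (A + A.transpose)).mulVec fun _ => 1)
      = ∑ i, ∑ j, ((1 / 2 : ℝ) • (A + A.transpose)) i j := by
    simp [dotProduct, Matrix.mulVec]
  have e2 : ∑ i, ∑ j, ((1 / 2 : ℝ) • (A + A.transpose)) i j = -(k : ℝ) * Q := by
    have hpt : ∀ i j, ((1 / 2 : ℝ) • (A + A.transpose)) i j
        = (1 / 2 : ℝ) * A i j + (1 / 2 : ℝ) * A j i := by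
      intro i j
      simp [Matrix.smul_apply, Matrix.add_apply, Matrix.transpose_apply]
      ring
    simp only [hpt]
    rw [Finset.sum_congr rfl fun i _ => Finset.sum_add_distrib, Finset.sum_add_distrib]
    have c1 : ∑ i, ∑ j, (1 / 2 : ℝ) * A i j = (1 / 2 : ℝ) * ∑ i, ∑ j, A i j := by
      simp only [← Finset.mul_sum]
    have c2 : ∑ i : Fin k, ∑ j, (1 / 2 : ℝ) * A j i = (1 / 2 : ℝ) * ∑ i, ∑ j, A i j := by
      rw [Finset.sum_comm]
      simp only [← Finset.mul_sum]
    rw [c1, c2, hAsum]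
    ring
  rw [e1, e2]
  exact hkQ
end
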